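/- Let f : ℝ × ℝ → ℝ be separately continuous (continuous in each variable when the other is fixed), and suppose that for every fixed y the map x ↦ f(x, y) is monotone (nondecreasing). Then f is jointly continuous on ℝ × ℝ. -/
import Mathlib


theorem stmt_11 (f : ℝ × ℝ → ℝ)
    (hx : ∀ y : ℝ, Continuous fun x : ℝ => f (x, y))
    (hy : ∀ x : ℝ, Continuous fun y : ℝ => f (x, y))
    (hmono : ∀ y : ℝ, Monotone fun x : ℝ => f (x, y)) :
    Continuous f := by
  rw [continuous_iff_continuousAt]
  rintro ⟨a, b⟩
  rw [Metric.continuousAt_iff]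
  intro ε hε
  -- continuity in x at a with ε/2
  obtain ⟨δ, hδ, hδx⟩ := Metric.continuous_iff.mp (hx b) a (ε / 2) (by linarith)
  set xp := a + δ / 2 with hxp
  set xm := a - δ / 2 with hxm
  have hdp : dist xp a < δ := by
    rw [Real.dist_eq]; rw [hxp]; rw [abs_of_nonneg (by linarith)]; linarith
  have hdm : dist xm a < δ := by
    rw [Real.dist_eq]; rw [hxm]
    rw [show a - δ / 2 - a = -(δ/2) by ring, abs_neg, abs_of_nonneg (by linarith)]
    linarith
  have hp := hδx xp hdp
  have hm := hδx xm hdm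
  rw [Real.dist_eq, abs_lt] at hp hm
  -- continuity in y at b for x = xp and x = xm, with ε/2
  obtain ⟨η₁, hη₁, hη₁y⟩ := Metric.continuous_iff.mp (hy xp) b (ε / 2) (by linarith)
  obtain ⟨η₂, hη₂, hη₂y⟩ := Metric.continuous_iff.mp (hy xm) b (ε / 2) (by linarith)
  refine ⟨min (δ / 2) (min η₁ η₂), by positivity, ?_⟩
  rintro ⟨x, y⟩ hdist
  rw [Prod.dist_eq] at hdist
  have h1 : dist x a < min (δ / 2) (min η₁ η₂) := lt_of_le_of_lt (le_max_left _ _) hdist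
  have h2 : dist y b < min (δ / 2) (min η₁ η₂) := lt_of_le_of_lt (le_max_right _ _) hdist
  have hxd : dist x a < δ / 2 := lt_of_lt_of_le h1 (min_le_left _ _)
  have hy1 : dist y b < η₁ := lt_of_lt_of_le h2 ((min_le_right _ _).trans (min_le_left _ _))
  have hy2 : dist y b < η₂ := lt_of_lt_of_le h2 ((min_le_right _ _).trans (min_le_right _ _))
  have hup := hη₁y y hy1
  have hlo := hη₂y y hy2
  rw [Real.dist_eq, abs_lt] at hup hlo hxd
  have hxle : x ≤ xp := by rw [hxp]; linarith
  have hxge : xm ≤ x := by rw [hxm]; linarith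
  have hmu : f (x, y) ≤ f (xp, y) := hmono y hxle
  have hml : f (xm, y) ≤ f (x, y) := hmono y hxge
  rw [Real.dist_eq, abs_lt]
  constructor <;> simp only at * <;> nlinarith
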